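/- Let alpha, beta be real numbers with 0 <= alpha <= 1, 0 <= beta <= 1, and alpha + beta > 1 (so alpha > 0 and beta > 0). Define conditional query probabilities p(q | x0, xt) for x0, xt in {A, B} and q in {A, B, AB} by: p(A|A,A) = 1; p(B|A,B) = (1-beta)/alpha, p(AB|A,B) = (alpha+beta-1)/alpha; p(A|B,A) = (1-alpha)/beta, p(AB|B,A) = (alpha+beta-1)/beta; p(B|B,B) = 1; all unspecified entries equal 0. Then for every q in {A, B, AB}, the quantity Sum over xt in {A,B} of M_{x0, xt} * p(q | x0, xt) does not depend on x0 and equals r(q), where M is the 2x2 matrix with rows (1-alpha, alpha) and (beta, 1-beta), and r(A) = 1-alpha, r(B) = 1-beta, r(AB) = alpha + beta - 1. -/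
import Mathlib


open Finset

/-- Conditional query probabilities `p(q ∣ x₀, xₜ)` of Table II(c) (case `α + β > 1`,
`t` odd). States: `0 = A`, `1 = B`; queries: `0 = A`, `1 = B`, `2 = AB`. -/
noncomputable def condTableC (α β : ℝ) : Fin 2 → Fin 2 → Fin 3 → ℝ := fun x0 xt q =>
  if x0 = 0 ∧ xt = 0 then (if q = 0 then 1 else 0)
  else if x0 = 0 ∧ xt = 1 then
    (if q = 1 then (1 - β) / α else if q = 2 then (α + β - 1) / α else 0)
  else if x0 = 1 ∧ xt = 0 then
    (if q = 0 then (1 - α) / β else if q = 2 then (α + β - 1) / β else 0)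
  else (if q = 1 then 1 else 0)

theorem stmt9 (α β : ℝ) (hα0 : 0 ≤ α) (hα1 : α ≤ 1) (hβ0 : 0 ≤ β) (hβ1 : β ≤ 1)
    (hs : 1 < α + β) :
    ∀ (q : Fin 3) (x0 : Fin 2),
      ∑ xt, (!![1 - α, α; β, 1 - β] : Matrix (Fin 2) (Fin 2) ℝ) x0 xt
          * condTableC α β x0 xt q
        = ![1 - α, 1 - β, α + β - 1] q := by
  have hα : α ≠ 0 := by nlinarith
  have hβ : β ≠ 0 := by nlinarith
  intro q x0
  fin_cases q <;> fin_cases x0 <;>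
    simp [Fin.sum_univ_two, condTableC, Matrix.cons_val_zero, Matrix.cons_val_one] <;>
    field_simp <;> ring
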